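/- If a trim lattice is graded (every maximal chain in every interval has the same cardinality), then it contains no sublattice isomorphic to N_5. -/

import Mathlib

variable {α : Type*}

/-- An element is join-irreducible if it is not the minimum and is not a join
of two strictly smaller elements. -/
def JoinIrred [Lattice α] (a : α) : Prop :=
  ¬ IsBot a ∧ ∀ b c : α, b < a → c < a → b ⊔ c ≠ a

/-- An element is meet-irreducible if it is not the maximum and is not a meet
of two strictly larger elements. -/
def MeetIrred [Lattice α] (a : α) : Prop :=
  ¬ IsTop a ∧ ∀ b c : α, a < b → a < c → b ⊓ c ≠ a

/-- An element `x` is left modular if `(y ⊔ x) ⊓ z = y ⊔ (x ⊓ z)` for all `y < z`. -/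
def LeftModular [Lattice α] (x : α) : Prop :=
  ∀ y z : α, y < z → (y ⊔ x) ⊓ z = y ⊔ (x ⊓ z)

/-- A maximal chain `⊥ = x 0 ⋖ x 1 ⋖ ⋯ ⋖ x n = ⊤` all of whose elements are left modular. -/
def IsLMChain [Lattice α] {n : ℕ} (x : Fin (n + 1) → α) : Prop :=
  IsBot (x 0) ∧ IsTop (x (Fin.last n)) ∧ (∀ i : Fin n, x i.castSucc ⋖ x i.succ) ∧
    ∀ i, LeftModular (x i)

/-- A finite lattice is trim if it has a left modular maximal chain of `n + 1` elements,
exactly `n` join-irreducibles and exactly `n` meet-irreducibles. -/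
def Trim (α : Type*) [Lattice α] [Finite α] : Prop :=
  ∃ (n : ℕ) (x : Fin (n + 1) → α), IsLMChain x ∧
    Nat.card {v : α // JoinIrred v} = n ∧ Nat.card {v : α // MeetIrred v} = n

/-- All maximal (saturated) chains between any two fixed endpoints have the same length. -/
def Graded (α : Type*) [Lattice α] : Prop :=
  ∀ (m k : ℕ) (c : Fin (m + 1) → α) (d : Fin (k + 1) → α),
    (∀ i : Fin m, c i.castSucc ⋖ c i.succ) → (∀ i : Fin k, d i.castSucc ⋖ d i.succ) →
    c 0 = d 0 → c (Fin.last m) = d (Fin.last k) → m = k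


/-!
Let `ρ a` be the number of join-irreducibles below `a`. Choosing, for each covering step
`c ⋖ d` of a saturated chain from `a` to `b`, a join-irreducible below `d` but not below `c`
injects the chain into the join-irreducibles below `b` and not below `a`; dually, it injects
into the meet-irreducibles above `a` and not above `b`. Gradedness makes every saturated chain
`⊥ → a → ⊤` have the length `n` of the trim chain, and since there are exactly `n` join- and
`n` meet-irreducibles, these injections are bijections: `ρ a` is the rank of `a` and `n - ρ a` the
number of meet-irreducibles above `a`. Counting irreducibles below a meet and above a join shows
that `ρ` is both super- and submodular, hence modular. A strictly monotone modular function
identifies the two comparable elements of a pentagon.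
-/

open Set OrderDual

lemma RelSeries.strictMono_of_covBy [Preorder α] (p : RelSeries {(x, y) : α × α | x ⋖ y}) :
    StrictMono p :=
  Fin.strictMono_iff_lt_succ.2 fun i => (p.step i).lt

lemma exists_covBy_relSeries [PartialOrder α] [WellFoundedLT α] [WellFoundedGT α] {a b : α}
    (h : a ≤ b) : ∃ p : RelSeries {(x, y) : α × α | x ⋖ y}, p.head = a ∧ p.last = b := by
  obtain ⟨s, hs0, n, hsn, hs⟩ := exists_covBy_seq_of_wellFoundedLT_wellFoundedGT_of_le h
  exact ⟨⟨n, fun i => s i, fun i => hs i i.isLt⟩, hs0, hsn⟩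

lemma Graded.length_add_length [Lattice α] (hgr : Graded α) {n : ℕ} {x : Fin (n + 1) → α}
    (hx : ∀ i : Fin n, x i.castSucc ⋖ x i.succ) (p q : RelSeries {(a, b) : α × α | a ⋖ b})
    (hpq : p.last = q.head) (hp : p.head = x 0) (hq : q.last = x (Fin.last n)) :
    p.length + q.length = n :=
  hgr _ n (p.smash q hpq) x (p.smash q hpq).step hx ((RelSeries.head_smash hpq).trans hp)
    ((RelSeries.last_smash hpq).trans hq)

lemma StrictMono.eq_of_le_of_sup_eq_of_inf_eq [Lattice α] {f : α → ℕ} (hf : StrictMono f)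
    (hmod : ∀ a b, f (a ⊔ b) + f (a ⊓ b) = f a + f b) {u v z : α} (huv : u ≤ v)
    (hsup : u ⊔ z = v ⊔ z) (hinf : u ⊓ z = v ⊓ z) : u = v := by
  refine huv.eq_of_not_lt fun hlt => (hf hlt).ne ?_
  have h := hmod u z
  rw [hsup, hinf, hmod v z] at h
  omega

section FiniteLattice

variable [Lattice α] [Finite α]

lemma exists_joinIrred_le_not_le {a b : α} (h : ¬ b ≤ a) :
    ∃ j, JoinIrred j ∧ j ≤ b ∧ ¬ j ≤ a := by
  obtain ⟨j, ⟨hjb, hja⟩, hmin⟩ :=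
    (toFinite {y : α | y ≤ b ∧ ¬ y ≤ a}).exists_minimalFor id _ ⟨b, le_rfl, h⟩
  refine ⟨j, ⟨fun hbot => hja (hbot a), fun c d hc hd hcd => ?_⟩, hjb, hja⟩
  by_cases hca : c ≤ a
  · by_cases hda : d ≤ a
    · exact hja (hcd ▸ sup_le hca hda)
    · exact hd.not_ge (hmin ⟨hd.le.trans hjb, hda⟩ hd.le)
  · exact hc.not_ge (hmin ⟨hc.le.trans hjb, hca⟩ hc.le)

lemma length_le_ncard_joinIrred {k : ℕ} {c : Fin (k + 1) → α} (hc : StrictMono c) :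
    k ≤ ({j | JoinIrred j} ∩ (Iic (c (Fin.last k)) \ Iic (c 0))).ncard := by
  choose j hj hjle hjnle using fun i : Fin k =>
    exists_joinIrred_le_not_le (hc i.castSucc_lt_succ).not_ge
  have hinj : Function.Injective j := Function.Injective.of_lt_imp_ne fun i i' hi heq =>
    hjnle i' (heq ▸ (hjle i).trans (hc.monotone (Fin.succ_le_castSucc_iff.2 hi)))
  have hrange : range j ⊆ {j | JoinIrred j} ∩ (Iic (c (Fin.last k)) \ Iic (c 0)) :=
    range_subset_iff.2 fun i => ⟨hj i, (hjle i).trans (hc.monotone (Fin.le_last _)),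
      fun h => hjnle i (h.trans (hc.monotone (Fin.zero_le _)))⟩
  calc k = (range j).ncard := by rw [ncard_range_of_injective hinj, Nat.card_fin]
    _ ≤ _ := ncard_le_ncard hrange

lemma length_le_ncard_meetIrred {k : ℕ} {c : Fin (k + 1) → α} (hc : StrictMono c) :
    k ≤ ({m | MeetIrred m} ∩ (Ici (c 0) \ Ici (c (Fin.last k)))).ncard := by
  -- `JoinIrred` on `αᵒᵈ` unfolds to `MeetIrred` on `α`.
  have h := length_le_ncard_joinIrred (α := αᵒᵈ) (c := toDual ∘ c ∘ Fin.rev)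
    fun _ _ h => toDual_lt_toDual.2 (hc (Fin.rev_lt_rev.2 h))
  simp only [Function.comp_apply, Fin.rev_last, Fin.rev_zero] at h
  exact h

lemma strictMono_ncard_joinIrred_inter_Iic :
    StrictMono fun a : α => ({j | JoinIrred j} ∩ Iic a).ncard := by
  intro a b hab
  obtain ⟨j, hj, hjb, hja⟩ := exists_joinIrred_le_not_le hab.not_ge
  refine ncard_lt_ncard ⟨inter_subset_inter_right _ (Iic_subset_Iic.2 hab.le), fun h => ?_⟩
  exact hja (h ⟨hj, hjb⟩).2

lemma ncard_joinIrred_inter_Iic_add_le (a b : α) :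
    ({j | JoinIrred j} ∩ Iic a).ncard + ({j | JoinIrred j} ∩ Iic b).ncard ≤
      ({j | JoinIrred j} ∩ Iic (a ⊔ b)).ncard +
        ({j | JoinIrred j} ∩ Iic (a ⊓ b)).ncard := by
  rw [← ncard_union_add_ncard_inter, ← inter_inter_distrib_left, Iic_inter_Iic]
  gcongr
  · exact toFinite _
  · rw [← inter_union_distrib_left]
    exact inter_subset_inter_right _ (union_subset (Iic_subset_Iic.2 le_sup_left)
      (Iic_subset_Iic.2 le_sup_right))

lemma ncard_meetIrred_inter_Ici_add_le (a b : α) :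
    ({m | MeetIrred m} ∩ Ici a).ncard + ({m | MeetIrred m} ∩ Ici b).ncard ≤
      ({m | MeetIrred m} ∩ Ici (a ⊓ b)).ncard + ({m | MeetIrred m} ∩ Ici (a ⊔ b)).ncard :=
  ncard_joinIrred_inter_Iic_add_le (α := αᵒᵈ) a b

lemma ncard_joinIrred_inter_Iic_add_ncard_meetIrred_inter_Ici (hgr : Graded α) {n : ℕ}
    {x : Fin (n + 1) → α} (hbot : IsBot (x 0)) (htop : IsTop (x (Fin.last n)))
    (hx : ∀ i : Fin n, x i.castSucc ⋖ x i.succ) (hJ : Nat.card {v : α // JoinIrred v} = n)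
    (hM : Nat.card {v : α // MeetIrred v} = n) (a : α) :
    ({j | JoinIrred j} ∩ Iic a).ncard + ({m | MeetIrred m} ∩ Ici a).ncard = n := by
  obtain ⟨p, hp0, hpa⟩ := exists_covBy_relSeries (hbot a)
  obtain ⟨q, hqa, hq1⟩ := exists_covBy_relSeries (htop a)
  have hlen := hgr.length_add_length hx p q (hpa.trans hqa.symm) hp0 hq1
  have hJp : p.length ≤ ({j | JoinIrred j} ∩ Iic a).ncard :=
    (length_le_ncard_joinIrred p.strictMono_of_covBy).trans <| ncard_le_ncard <|
      inter_subset_inter_right _ (hpa ▸ sdiff_subset)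
  have hJq : q.length ≤ ({j | JoinIrred j} \ Iic a).ncard :=
    (length_le_ncard_joinIrred q.strictMono_of_covBy).trans <| ncard_le_ncard <|
      fun j hj => ⟨hj.1, hqa ▸ hj.2.2⟩
  have hMp : p.length ≤ ({m | MeetIrred m} \ Ici a).ncard :=
    (length_le_ncard_meetIrred p.strictMono_of_covBy).trans <| ncard_le_ncard <|
      fun m hm => ⟨hm.1, hpa ▸ hm.2.2⟩
  have hMq : q.length ≤ ({m | MeetIrred m} ∩ Ici a).ncard :=
    (length_le_ncard_meetIrred q.strictMono_of_covBy).trans <| ncard_le_ncard <|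
      inter_subset_inter_right _ (hqa ▸ sdiff_subset)
  have hJsplit : _ = n :=
    (ncard_inter_add_ncard_sdiff_eq_ncard {j | JoinIrred j} (Iic a)).trans hJ
  have hMsplit : _ = n :=
    (ncard_inter_add_ncard_sdiff_eq_ncard {m | MeetIrred m} (Ici a)).trans hM
  omega

lemma ncard_joinIrred_inter_Iic_sup_add_inf (hgr : Graded α) {n : ℕ}
    {x : Fin (n + 1) → α} (hbot : IsBot (x 0)) (htop : IsTop (x (Fin.last n)))
    (hx : ∀ i : Fin n, x i.castSucc ⋖ x i.succ) (hJ : Nat.card {v : α // JoinIrred v} = n)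
    (hM : Nat.card {v : α // MeetIrred v} = n) (a b : α) :
    ({j | JoinIrred j} ∩ Iic (a ⊔ b)).ncard + ({j | JoinIrred j} ∩ Iic (a ⊓ b)).ncard =
      ({j | JoinIrred j} ∩ Iic a).ncard + ({j | JoinIrred j} ∩ Iic b).ncard := by
  have hrank := ncard_joinIrred_inter_Iic_add_ncard_meetIrred_inter_Ici hgr hbot htop hx hJ hM
  have hsuper := ncard_joinIrred_inter_Iic_add_le a b
  have hsub := ncard_meetIrred_inter_Ici_add_le a b
  have := hrank a; have := hrank b; have := hrank (a ⊔ b); have := hrank (a ⊓ b)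
  omega

end FiniteLattice

/-- A graded trim lattice contains no sublattice isomorphic to the pentagon `N₅`. -/
theorem no_N5 [Lattice α] [Finite α] (htrim : Trim α) (hgr : Graded α) :
    ¬ ∃ w t u v z : α, w < u ∧ u < v ∧ v < t ∧ w < z ∧ z < t ∧
      u ⊔ z = t ∧ v ⊔ z = t ∧ u ⊓ z = w ∧ v ⊓ z = w := by
  obtain ⟨n, x, ⟨hbot, htop, hx, -⟩, hJ, hM⟩ := htrim
  rintro ⟨w, t, u, v, z, -, huv, -, -, -, huz, hvz, huzm, hvzm⟩
  exact huv.ne <| strictMono_ncard_joinIrred_inter_Iic.eq_of_le_of_sup_eq_of_inf_eq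
    (ncard_joinIrred_inter_Iic_sup_add_inf hgr hbot htop hx hJ hM) huv.le
    (huz.trans hvz.symm) (huzm.trans hvzm.symm)
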